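/- (Unbiased hinge loss) Write Z := 2Y − 1 and Z* := 2Y* − 1 (values in {−1,+1}), and let [t]₊ := max(t, 0). For every fixed ẑ ∈ ℝ, E[[1 − Z* ẑ]₊] = E[ ((Z+1)/2) · ([1 − ẑ]₊ + (p−1)[1 + ẑ]₊)/p + ((1−Z)/2) · [1 + ẑ]₊ ]. -/

import Mathlib

open MeasureTheory

/-! A function of a `{0,1}`-valued variable is affine in it, so the left side is affine in
`P(Y* = 1)` and the right side affine in `P(Y = 1)`. Since there are no false positives,
`P(Y = 1) = P(Y = 1, Y* = 1) = p · P(Y* = 1)`, and the identity becomes algebra in the two hinge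
values `[1 ∓ ẑ]₊`. -/

lemma eq_indicator_one_of_zero_or_one {Ω : Type*} {f : Ω → ℝ} (hf : ∀ ω, f ω = 0 ∨ f ω = 1) :
    f = {ω | f ω = 1}.indicator 1 := by
  funext ω
  rcases hf ω with h | h <;> simp [h]

section ZeroOneValued

variable {Ω : Type*} [MeasurableSpace Ω] {μ : Measure Ω} {f : Ω → ℝ}

lemma integral_eq_measureReal_of_zero_or_one (hf : ∀ ω, f ω = 0 ∨ f ω = 1)
    (hfm : Measurable f) : ∫ ω, f ω ∂μ = μ.real {ω | f ω = 1} := by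
  conv_lhs => rw [eq_indicator_one_of_zero_or_one hf]
  exact integral_indicator_one (hfm (measurableSet_singleton 1))

lemma integrable_of_zero_or_one [IsFiniteMeasure μ] (hf : ∀ ω, f ω = 0 ∨ f ω = 1)
    (hfm : Measurable f) : Integrable f μ := by
  rw [eq_indicator_one_of_zero_or_one hf]
  exact (integrable_const 1).indicator (hfm (measurableSet_singleton 1))

lemma integral_comp_of_zero_or_one [IsProbabilityMeasure μ] (hf : ∀ ω, f ω = 0 ∨ f ω = 1)
    (hfm : Measurable f) (g : ℝ → ℝ) :
    ∫ ω, g (f ω) ∂μ = μ.real {ω | f ω = 1} * (g 1 - g 0) + g 0 := by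
  have hg : ∀ ω, g (f ω) = f ω * (g 1 - g 0) + g 0 := by
    intro ω
    rcases hf ω with h | h <;> simp [h]
  simp_rw [hg]
  rw [integral_add ((integrable_of_zero_or_one hf hfm).mul_const _) (integrable_const _),
    integral_mul_const, integral_eq_measureReal_of_zero_or_one hf hfm, integral_const,
    probReal_univ, one_smul]

end ZeroOneValued

lemma measureReal_eq_mul_of_propensity {Ω : Type*} [MeasurableSpace Ω] {μ : Measure Ω}
    {Y Ystar : Ω → ℝ} (hYs : ∀ ω, Ystar ω = 0 ∨ Ystar ω = 1) {p : ℝ} (hp : 0 ≤ p)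
    (hnofp : μ {ω | Y ω = 1 ∧ Ystar ω = 0} = 0)
    (hprop : μ {ω | Y ω = 1 ∧ Ystar ω = 1} = ENNReal.ofReal p * μ {ω | Ystar ω = 1}) :
    μ.real {ω | Y ω = 1} = p * μ.real {ω | Ystar ω = 1} := by
  have hdiff : {ω | Y ω = 1} \ {ω | Ystar ω = 1} = {ω | Y ω = 1 ∧ Ystar ω = 0} := by
    ext ω
    rcases hYs ω with h | h <;> simp [h]
  have hinter : μ {ω | Y ω = 1 ∧ Ystar ω = 1} = μ {ω | Y ω = 1} :=
    measure_inter_conull' (hdiff ▸ hnofp)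
  rw [measureReal_def, ← hinter, hprop, ENNReal.toReal_mul,
    ENNReal.toReal_ofReal hp, measureReal_def]

theorem unbiased_hinge_loss_general
    {Ω : Type*} [MeasurableSpace Ω] (P : Measure Ω) [IsProbabilityMeasure P]
    (Y Ystar : Ω → ℝ)
    (hY : ∀ ω, Y ω = 0 ∨ Y ω = 1) (hYs : ∀ ω, Ystar ω = 0 ∨ Ystar ω = 1)
    (hmY : Measurable Y) (hmYs : Measurable Ystar)
    (p : ℝ) (hp0 : 0 < p)
    (hnofp : P {ω | Y ω = 1 ∧ Ystar ω = 0} = 0)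
    (hprop : P {ω | Y ω = 1 ∧ Ystar ω = 1} = ENNReal.ofReal p * P {ω | Ystar ω = 1})
    (zhat : ℝ) :
    ∫ ω, max (1 - (2 * Ystar ω - 1) * zhat) 0 ∂P
      = ∫ ω, (((2 * Y ω - 1) + 1) / 2
              * ((max (1 - zhat) 0 + (p - 1) * max (1 + zhat) 0) / p)
            + (1 - (2 * Y ω - 1)) / 2 * max (1 + zhat) 0) ∂P := by
  have hL := integral_comp_of_zero_or_one (μ := P) hYs hmYs
    fun y => max (1 - (2 * y - 1) * zhat) 0
  have hR := integral_comp_of_zero_or_one (μ := P) hY hmY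
    fun y => ((2 * y - 1) + 1) / 2 * ((max (1 - zhat) 0 + (p - 1) * max (1 + zhat) 0) / p)
      + (1 - (2 * y - 1)) / 2 * max (1 + zhat) 0
  beta_reduce at hL hR
  rw [hL, hR, measureReal_eq_mul_of_propensity hYs hp0.le hnofp hprop]
  norm_num
  field_simp
  ring

/-- Unbiased hinge loss: with `Z = 2Y − 1`, `Z* = 2Y* − 1`,
`E[[1 − Z* ẑ]₊] = E[((Z+1)/2)·([1 − ẑ]₊ + (p−1)[1 + ẑ]₊)/p + ((1−Z)/2)·[1 + ẑ]₊]`. -/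
theorem unbiased_hinge_loss
    {Ω : Type*} [MeasurableSpace Ω] (P : Measure Ω) [IsProbabilityMeasure P]
    (Y Ystar : Ω → ℝ)
    (hY : ∀ ω, Y ω = 0 ∨ Y ω = 1) (hYs : ∀ ω, Ystar ω = 0 ∨ Ystar ω = 1)
    (hmY : Measurable Y) (hmYs : Measurable Ystar)
    (p : ℝ) (hp0 : 0 < p) (hp1 : p ≤ 1)
    (hnofp : P {ω | Y ω = 1 ∧ Ystar ω = 0} = 0)
    (hpos : 0 < P {ω | Ystar ω = 1})
    (hprop : P {ω | Y ω = 1 ∧ Ystar ω = 1} = ENNReal.ofReal p * P {ω | Ystar ω = 1})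
    (zhat : ℝ) :
    ∫ ω, max (1 - (2 * Ystar ω - 1) * zhat) 0 ∂P
      = ∫ ω, (((2 * Y ω - 1) + 1) / 2
              * ((max (1 - zhat) 0 + (p - 1) * max (1 + zhat) 0) / p)
            + (1 - (2 * Y ω - 1)) / 2 * max (1 + zhat) 0) ∂P :=
  unbiased_hinge_loss_general P Y Ystar hY hYs hmY hmYs p hp0 hnofp hprop zhat
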